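/- A polynomial p is a polynomial invariant for the initial value x_0 (i.e., the function t ↦ p(x(t; x_0)) is identically zero on the domain of the solution) if and only if every iterated Lie derivative vanishes at x_0: for all j ≥ 0, (L_F^{(j)} p)(x_0) = 0. -/

import Mathlib

/-!
Along a solution, `d/dt p(x(t)) = (L_F p)(x(t))`, so the `j`-th derivative of `t ↦ p(x(t))` is
`t ↦ (L_F^{(j)} p)(x(t))` and its value at `0` is `(L_F^{(j)} p)(x₀)`. The function `t ↦ p(x(t))`
is analytic on the interval, so it vanishes there iff all its derivatives vanish at `0`.
-/

open MvPolynomial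

noncomputable def lieD {N : ℕ} (F : Fin N → MvPolynomial (Fin N) ℝ)
    (p : MvPolynomial (Fin N) ℝ) : MvPolynomial (Fin N) ℝ :=
  ∑ i, pderiv i p * F i

noncomputable def lieIter {N : ℕ} (F : Fin N → MvPolynomial (Fin N) ℝ) :
    ℕ → MvPolynomial (Fin N) ℝ → MvPolynomial (Fin N) ℝ
  | 0, p => p
  | j + 1, p => lieD F (lieIter F j p)

section Analytic

variable {𝕜 E : Type*} [NontriviallyNormedField 𝕜] [CharZero 𝕜]
  [NormedAddCommGroup E] [NormedSpace 𝕜 E] [CompleteSpace E] {f : 𝕜 → E} {z₀ : 𝕜}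

theorem AnalyticAt.eventually_eq_zero_iff_iteratedDeriv_eq_zero (hf : AnalyticAt 𝕜 f z₀) :
    (∀ᶠ z in nhds z₀, f z = 0) ↔ ∀ n, iteratedDeriv n f z₀ = 0 := by
  rw [← analyticOrderAt_eq_top, ENat.eq_top_iff_forall_ge]
  simp only [natCast_le_analyticOrderAt_iff_iteratedDeriv_eq_zero hf]
  exact ⟨fun h n => h (n + 1) n n.lt_succ_self, fun h _ i _ => h i⟩

theorem AnalyticOnNhd.eqOn_zero_iff_iteratedDeriv_eq_zero {U : Set 𝕜}
    (hf : AnalyticOnNhd 𝕜 f U) (hUo : IsOpen U) (hU : IsPreconnected U) (hz₀ : z₀ ∈ U) :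
    Set.EqOn f 0 U ↔ ∀ n, iteratedDeriv n f z₀ = 0 := by
  rw [← (hf z₀ hz₀).eventually_eq_zero_iff_iteratedDeriv_eq_zero]
  refine ⟨fun h => ?_, fun h => hf.eqOn_zero_of_preconnected_of_eventuallyEq_zero hU hz₀ h⟩
  filter_upwards [hUo.mem_nhds hz₀] with z hz using h hz

end Analytic

section LieDerivative

variable {N : ℕ} (F : Fin N → MvPolynomial (Fin N) ℝ)

noncomputable def lieDerivation :
    Derivation ℝ (MvPolynomial (Fin N) ℝ) (MvPolynomial (Fin N) ℝ) :=
  ∑ i, F i • pderiv i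

theorem lieDerivation_apply (p : MvPolynomial (Fin N) ℝ) : lieDerivation F p = lieD F p := by
  rw [lieDerivation, ← Derivation.coeFnAddMonoidHom_apply, map_sum, Finset.sum_apply]
  simp [lieD, Derivation.coeFnAddMonoidHom_apply, mul_comm]

theorem lieDerivation_X (i : Fin N) : lieDerivation F (X i) = F i := by
  simp [lieDerivation_apply, lieD, pderiv_X, Pi.single_apply]

theorem hasDerivAt_eval_comp {x : ℝ → Fin N → ℝ} {t : ℝ}
    (hx : HasDerivAt x (fun i => eval (x t) (F i)) t) (p : MvPolynomial (Fin N) ℝ) :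
    HasDerivAt (fun s => eval (x s) p) (eval (x t) (lieD F p)) t := by
  rw [← lieDerivation_apply]
  induction p using MvPolynomial.induction_on with
  | C a => simpa using hasDerivAt_const t a
  | add p q hp hq => simpa only [map_add] using hp.fun_add hq
  | mul_X p i hp =>
    simpa only [Derivation.leibniz, lieDerivation_X, map_add, map_mul, smul_eq_mul, eval_X,
      mul_comm, add_comm] using hp.fun_mul (hasDerivAt_pi.mp hx i)

theorem eqOn_iteratedDeriv_eval_comp_lieIter {U : Set ℝ} (hU : IsOpen U) {x : ℝ → Fin N → ℝ}
    (hx : ∀ t ∈ U, HasDerivAt x (fun i => eval (x t) (F i)) t) (p : MvPolynomial (Fin N) ℝ)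
    (j : ℕ) :
    Set.EqOn (iteratedDeriv j fun s => eval (x s) p) (fun t => eval (x t) (lieIter F j p)) U := by
  induction j with
  | zero => intro t _; rfl
  | succ j ih =>
    intro t ht
    rw [iteratedDeriv_succ, (ih.eventuallyEq_of_mem (hU.mem_nhds ht)).deriv_eq]
    exact (hasDerivAt_eval_comp F (hx t ht) _).deriv

end LieDerivative

theorem invariant_iff_lie_derivs_vanish {N : ℕ}
    (F : Fin N → MvPolynomial (Fin N) ℝ) (x0 : Fin N → ℝ)
    (r : ℝ) (hr : 0 < r) (x : ℝ → Fin N → ℝ)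
    (hx0 : x 0 = x0)
    (hode : ∀ t ∈ Set.Ioo (-r) r, HasDerivAt x (fun i => eval (x t) (F i)) t)
    (hanalytic : AnalyticOnNhd ℝ x (Set.Ioo (-r) r))
    (p : MvPolynomial (Fin N) ℝ) :
    (∀ t ∈ Set.Ioo (-r) r, eval (x t) p = 0) ↔
      (∀ j : ℕ, eval x0 (lieIter F j p) = 0) := by
  subst hx0
  have h0 : (0 : ℝ) ∈ Set.Ioo (-r) r := ⟨neg_lt_zero.mpr hr, hr⟩
  have hp : AnalyticOnNhd ℝ (fun t => eval (x t) p) (Set.Ioo (-r) r) :=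
    .aeval_mvPolynomial (analyticOnNhd_pi_iff.mp hanalytic) p
  refine (hp.eqOn_zero_iff_iteratedDeriv_eq_zero isOpen_Ioo isPreconnected_Ioo h0).trans ?_
  simp only [eqOn_iteratedDeriv_eval_comp_lieIter F isOpen_Ioo hode p _ h0]
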